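/- arXiv:2112.00899 — 7 statements merged into one kernel-verified Lean document; each statement's English description precedes it below -/
import Mathlib

section
/- For positive integers a ≤ b ≤ d forming an integer triangle (so a + b ≥ d + 1), and for A the area given by Heron's formula, the altitude h = 2A/x measured from any side x ∈ {a, b, d} satisfies h² > 1/2; in particular every altitude of an integer triangle is greater than 1/√2. -/
set_option maxHeartbeats 1000000


theorem altitude_sq_gt_half (a b d : ℕ) (ha : 0 < a) (hab : a ≤ b) (hbd : b ≤ d)
    (htri : d + 1 ≤ a + b) (A : ℝ) (hA : 0 ≤ A)
    (heron : 16 * A ^ 2 =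
      ((a : ℝ) + b + d) * ((a : ℝ) + b - d) * ((a : ℝ) - b + d) * (-(a : ℝ) + b + d))
    (x : ℝ) (hx : x = (a : ℝ) ∨ x = (b : ℝ) ∨ x = (d : ℝ)) :
    (2 * A / x) ^ 2 > 1 / 2 ∧ 2 * A / x > 1 / Real.sqrt 2 := by
  have ha' : (1:ℝ) ≤ (a:ℝ) := by exact_mod_cast ha
  have hab' : (a:ℝ) ≤ (b:ℝ) := by exact_mod_cast hab
  have hbd' : (b:ℝ) ≤ (d:ℝ) := by exact_mod_cast hbd
  have htri' : (d:ℝ) + 1 ≤ (a:ℝ) + (b:ℝ) := by exact_mod_cast htri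
  have hx1 : (1:ℝ) ≤ x := by rcases hx with h|h|h <;> subst h <;> linarith
  have hxd : x ≤ (d:ℝ) := by rcases hx with h|h|h <;> subst h <;> linarith
  have hx0 : (0:ℝ) < x := by linarith
  have p1 : (2:ℝ) * d + 1 ≤ (a:ℝ) + b + d := by linarith
  have p2 : (1:ℝ) ≤ (a:ℝ) + b - d := by linarith
  have p3 : (a:ℝ) ≤ (a:ℝ) - b + d := by linarith
  have p4 : (d:ℝ) ≤ -(a:ℝ) + b + d := by linarith
  have key : 2 * x ^ 2 < 16 * A ^ 2 := by
    rw [heron]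
    have h12 : (2:ℝ) * d + 1 ≤ ((a:ℝ) + b + d) * ((a:ℝ) + b - d) := by
      nlinarith
    have h123 : ((2:ℝ) * d + 1) * a ≤ ((a:ℝ) + b + d) * ((a:ℝ) + b - d) * ((a:ℝ) - b + d) := by
      nlinarith
    have hP3 : (0:ℝ) ≤ ((a:ℝ) + b + d) * ((a:ℝ) + b - d) * ((a:ℝ) - b + d) := by
      nlinarith
    have h1234 : ((2:ℝ) * d + 1) * a * d ≤
        ((a:ℝ) + b + d) * ((a:ℝ) + b - d) * ((a:ℝ) - b + d) * (-(a:ℝ) + b + d) :=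
      mul_le_mul h123 p4 (by linarith) hP3
    have h5 : ((2:ℝ) * d + 1) * d ≤ ((2:ℝ) * d + 1) * a * d := by
      nlinarith [mul_nonneg (mul_nonneg (by linarith : (0:ℝ) ≤ (a:ℝ) - 1)
        (by linarith : (0:ℝ) ≤ 2 * (d:ℝ) + 1)) (by linarith : (0:ℝ) ≤ (d:ℝ))]
    have hx2 : x ^ 2 ≤ (d:ℝ) ^ 2 := by nlinarith
    have h6 : ((2:ℝ) * d + 1) * d = 2 * (d:ℝ) ^ 2 + d := by ring
    have hd1 : (1:ℝ) ≤ (d:ℝ) := by linarith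
    linarith
  have hA0 : 0 < A := by
    rcases hA.lt_or_eq with h | h
    · exact h
    · exfalso; nlinarith
  have hh : 0 < 2 * A / x := div_pos (by linarith) hx0
  have hsq : (2 * A / x) ^ 2 > 1 / 2 := by
    rw [div_pow, gt_iff_lt, div_lt_div_iff₀ (by norm_num) (by positivity)]
    ring_nf
    ring_nf at key
    linarith
  refine ⟨hsq, ?_⟩
  have h2 : (1 / Real.sqrt 2) ^ 2 = 1 / 2 := by
    rw [div_pow, one_pow, Real.sq_sqrt (by norm_num : (0:ℝ) ≤ 2)]
  have := lt_of_pow_lt_pow_left₀ 2 (le_of_lt hh) (by rw [h2]; exact hsq)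
  exact this
end

section
/- If an integer triangle has side lengths a ≤ b ≤ d with a ≥ 2, then the altitude from any side is greater than 1. -/
theorem altitude_gt_one (a b d : ℕ) (ha : 2 ≤ a) (hab : a ≤ b) (hbd : b ≤ d)
    (htri : d + 1 ≤ a + b) (A : ℝ) (hA : 0 ≤ A)
    (heron : 16 * A ^ 2 =
      ((a : ℝ) + b + d) * ((a : ℝ) + b - d) * ((a : ℝ) - b + d) * (-(a : ℝ) + b + d))
    (x : ℝ) (hx : x = (a : ℝ) ∨ x = (b : ℝ) ∨ x = (d : ℝ)) :
    2 * A / x > 1 := by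
  have ha' : (2 : ℝ) ≤ (a : ℝ) := by exact_mod_cast ha
  have hab' : (a : ℝ) ≤ (b : ℝ) := by exact_mod_cast hab
  have hbd' : (b : ℝ) ≤ (d : ℝ) := by exact_mod_cast hbd
  have ht' : (d : ℝ) + 1 ≤ (a : ℝ) + b := by exact_mod_cast htri
  have hd2 : (2 : ℝ) ≤ (d : ℝ) := by linarith
  have p1 : (2 * (d:ℝ) + 1) ≤ (a:ℝ) + b + d := by linarith
  have p2 : (1:ℝ) ≤ (a:ℝ) + b - d := by linarith
  have p3 : (2:ℝ) ≤ (a:ℝ) - b + d := by linarith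
  have p4 : (d:ℝ) ≤ -(a:ℝ) + b + d := by linarith
  have n1 : (0:ℝ) ≤ ((a:ℝ) + b + d) * ((a:ℝ) + b - d) :=
    mul_nonneg (by linarith) (by linarith)
  have n2 : (0:ℝ) ≤ ((a:ℝ) + b + d) * ((a:ℝ) + b - d) * ((a:ℝ) - b + d) :=
    mul_nonneg n1 (by linarith)
  have k1 : (2 * (d:ℝ) + 1) * 1 ≤ ((a:ℝ) + b + d) * ((a:ℝ) + b - d) :=
    mul_le_mul p1 p2 (by norm_num) (by linarith)
  have k2 : (2 * (d:ℝ) + 1) * 1 * 2 ≤ ((a:ℝ) + b + d) * ((a:ℝ) + b - d) * ((a:ℝ) - b + d) :=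
    mul_le_mul k1 p3 (by norm_num) n1
  have key : (2 * (d:ℝ) + 1) * 1 * 2 * (d:ℝ) ≤ 16 * A ^ 2 := by
    rw [heron]
    exact mul_le_mul k2 p4 (by linarith) n2
  have h2A : 2 * A > (d : ℝ) := by
    by_contra h
    push_neg at h
    nlinarith [mul_nonneg (by linarith : (0:ℝ) ≤ (d:ℝ) - 2*A) (by linarith : (0:ℝ) ≤ (d:ℝ) + 2*A)]
  have hxd : x ≤ (d : ℝ) := by rcases hx with h | h | h <;> simp [h] <;> linarith
  have hxpos : 0 < x := by rcases hx with h | h | h <;> simp [h] <;> linarith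
  rw [gt_iff_lt, lt_div_iff₀ hxpos]
  linarith
end

section
/- If an integer tetrahedron has perimeter n and maximum face-perimeter M (the maximum over the four triangular faces of the sum of that face's three side lengths), then ⌈(3M+3)/2⌉ ≤ n ≤ 2M, equivalently ⌈n/2⌉ ≤ M ≤ ⌊(2n−3)/3⌋. -/
/-- An integer tetrahedron: four affinely independent points in `ℝ³` all of whose
pairwise distances are (positive) integers. -/
def IsIntegerTetrahedron (v : Fin 4 → EuclideanSpace ℝ (Fin 3)) : Prop :=
  AffineIndependent ℝ v ∧ ∀ i j : Fin 4, i ≠ j → ∃ m : ℕ, 0 < m ∧ dist (v i) (v j) = m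

/-- `v` has perimeter `n`: the six edge lengths sum to `n` (ordered pairs count twice). -/
def TetraPerim (v : Fin 4 → EuclideanSpace ℝ (Fin 3)) (n : ℕ) : Prop :=
  ∑ i : Fin 4, ∑ j : Fin 4, dist (v i) (v j) = 2 * (n : ℝ)

/-- The perimeter of the face of `v` opposite the vertex `l` (each edge counted twice
in the ordered double sum, whence the division by `2`). -/
noncomputable def FacePerim (v : Fin 4 → EuclideanSpace ℝ (Fin 3)) (l : Fin 4) : ℝ :=
  (∑ i : Fin 4, ∑ j : Fin 4, if i ≠ l ∧ j ≠ l then dist (v i) (v j) else 0) / 2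

/-- `v` has maximum face-perimeter `M`. -/
def TetraMaxFacePerim (v : Fin 4 → EuclideanSpace ℝ (Fin 3)) (M : ℕ) : Prop :=
  (∃ l : Fin 4, FacePerim v l = (M : ℝ)) ∧ ∀ l : Fin 4, FacePerim v l ≤ (M : ℝ)

/-!
Summing the four face perimeters counts every edge twice, so `2n ≤ 4M`. For the lower bound,
let the face opposite the vertex `l` have perimeter `M` and let `s` be the sum of the three edges
at `l`, so that `n = M + s`. Each edge of that face is at least one shorter than the two edges
from `l` to its endpoints, since the distances are integers and affine independence makes the
triangle inequality strict; summing, `M + 3 ≤ 2s`, i.e. `3M + 3 ≤ 2n`.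
-/

theorem AffineIndependent.dist_lt_dist_add_dist {ι V P : Type*} [NormedAddCommGroup V]
    [NormedSpace ℝ V] [StrictConvexSpace ℝ V] [MetricSpace P] [NormedAddTorsor V P]
    {v : ι → P} (hv : AffineIndependent ℝ v) {i j k : ι} (hij : i ≠ j) (hjk : j ≠ k)
    (hik : i ≠ k) : dist (v i) (v k) < dist (v i) (v j) + dist (v j) (v k) := by
  have hinj : Function.Injective ![i, j, k] := by
    simp only [Matrix.vecCons, Fin.cons_injective_iff]
    simp [hij, hik, hjk, Function.injective_of_subsingleton]
  exact dist_lt_dist_add_dist_iff.mpr (hv.not_wbtw_of_injective i j k hinj)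

theorem IsIntegerTetrahedron.dist_add_one_le {v : Fin 4 → EuclideanSpace ℝ (Fin 3)}
    (hv : IsIntegerTetrahedron v) {i j k : Fin 4} (hij : i ≠ j) (hjk : j ≠ k) (hik : i ≠ k) :
    dist (v i) (v k) + 1 ≤ dist (v i) (v j) + dist (v j) (v k) := by
  have hlt := hv.1.dist_lt_dist_add_dist hij hjk hik
  obtain ⟨a, -, ha⟩ := hv.2 i k hik
  obtain ⟨b, -, hb⟩ := hv.2 i j hij
  obtain ⟨c, -, hc⟩ := hv.2 j k hjk
  rw [ha, hb, hc] at hlt ⊢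
  exact_mod_cast (show a < b + c by exact_mod_cast hlt)

section FacePerim

variable (v : Fin 4 → EuclideanSpace ℝ (Fin 3))

theorem sum_facePerim : ∑ l, FacePerim v l = ∑ i, ∑ j, dist (v i) (v j) := by
  simp [FacePerim, Fin.sum_univ_four, dist_comm]
  ring

theorem two_mul_facePerim_add_sum_dist (l : Fin 4) :
    2 * FacePerim v l + 2 * ∑ i, dist (v l) (v i) = ∑ i, ∑ j, dist (v i) (v j) := by
  fin_cases l <;> simp [FacePerim, Fin.sum_univ_four] <;> grind [dist_comm]

theorem facePerim_add_three_le
    (htri : ∀ i j k, i ≠ j → j ≠ k → i ≠ k →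
      dist (v i) (v k) + 1 ≤ dist (v i) (v j) + dist (v j) (v k)) (l : Fin 4) :
    FacePerim v l + 3 ≤ 2 * ∑ i, dist (v l) (v i) := by
  have hsum : ∑ i, ∑ j, (if i ≠ l ∧ j ≠ l ∧ i ≠ j then dist (v i) (v j) + 1 else 0) ≤
      ∑ i, ∑ j, (if i ≠ l ∧ j ≠ l ∧ i ≠ j then dist (v i) (v l) + dist (v l) (v j) else 0) := by
    gcongr with i _ j _
    split_ifs with h
    exacts [htri i l j h.1 h.2.1.symm h.2.2, le_rfl]
  fin_cases l <;> simp [FacePerim, Fin.sum_univ_four, dist_comm] at hsum ⊢ <;> linarith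

end FacePerim

theorem perimeter_maxFacePerimeter_bounds (v : Fin 4 → EuclideanSpace ℝ (Fin 3))
    (n M : ℕ) (hv : IsIntegerTetrahedron v) (hn : TetraPerim v n)
    (hM : TetraMaxFacePerim v M) :
    ((3 * M + 4) / 2 ≤ n ∧ n ≤ 2 * M) ∧ ((n + 1) / 2 ≤ M ∧ M ≤ (2 * n - 3) / 3) := by
  obtain ⟨⟨l, hl⟩, hle⟩ := hM
  have hlower : (3 * M + 3 : ℝ) ≤ 2 * n := by
    have := facePerim_add_three_le v (fun _ _ _ ↦ hv.dist_add_one_le) l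
    linarith [two_mul_facePerim_add_sum_dist v l, hn.symm]
  have hupper : (n : ℝ) ≤ 2 * M := by
    have := Finset.sum_le_card_nsmul Finset.univ (FacePerim v) M fun l _ ↦ hle l
    rw [sum_facePerim, hn] at this
    simp only [Finset.card_univ, Fintype.card_fin, nsmul_eq_mul, Nat.cast_ofNat] at this
    linarith
  have h3 : 3 * M + 3 ≤ 2 * n := by exact_mod_cast hlower
  have h2 : n ≤ 2 * M := by exact_mod_cast hupper
  omega
end

section
/- For n a positive integer divisible by 3, the number of positive integer pairs (A, a) with 3A + 3a = n, A < 2a, and A < √3 · a equals ⌊n/(3+√3)⌋. (These pairs parametrize integer tetrahedra of perimeter n fixed by a 3-cycle vertex permutation.) -/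
open scoped Classical in
theorem count_three_cycle_fixed (n : ℕ) (hn : 0 < n) (h3 : 3 ∣ n) :
    ((Finset.Icc 1 n ×ˢ Finset.Icc 1 n).filter
        (fun p : ℕ × ℕ =>
          3 * p.1 + 3 * p.2 = n ∧ p.1 < 2 * p.2 ∧
            (p.1 : ℝ) < Real.sqrt 3 * p.2)).card =
      ⌊(n : ℝ) / (3 + Real.sqrt 3)⌋₊ := by
  obtain ⟨m, rfl⟩ := h3
  have hm : 1 ≤ m := by omega
  set s : ℝ := Real.sqrt 3 with hs
  have hs2 : s ^ 2 = 3 := Real.sq_sqrt (by norm_num)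
  have hs0 : 0 ≤ s := Real.sqrt_nonneg 3
  have hs1 : 1 < s := by nlinarith
  have hs_lt2 : s < 2 := by nlinarith
  have hirr : Irrational s := (Nat.prime_three.irrational_sqrt)
  set x : ℝ := m / (1 + s) with hxdef
  have h1s : (0:ℝ) < 1 + s := by linarith
  have hx0 : 0 ≤ x := by positivity
  set k := ⌊x⌋₊ with hk
  have hkx : (k:ℝ) < x := by
    rcases lt_or_eq_of_le (Nat.floor_le hx0) with h | h
    · exact h
    · exfalso
      have hk0 : 0 < k := by
        rcases Nat.eq_zero_or_pos k with h0 | h0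
        · exfalso
          have hx00 : x = 0 := by rw [← h, ← hk, h0]; simp
          have : (m:ℝ) = 0 := by
            have := hx00
            rw [hxdef, div_eq_zero_iff] at this
            rcases this with h' | h'
            · exact h'
            · linarith
          have : m = 0 := by exact_mod_cast this
          omega
        · exact h0
      have hsval : s = (m:ℝ) / k - 1 := by
        have hkR : (0:ℝ) < k := by exact_mod_cast hk0
        have : (k:ℝ) * (1 + s) = m := by
          rw [h, hxdef]; field_simp
        field_simp
        linarith [this]
      have : Irrational ((m:ℝ)/k - 1) := hsval ▸ hirr
      have h2 : ¬ Irrational ((m:ℝ)/k - 1) := by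
        have : ((m:ℝ)/k - 1) = ((m/k - 1 : ℚ) : ℝ) := by push_cast; ring
        rw [this]
        exact Rat.not_irrational _
      exact h2 this
  have hxm : x < m := by
    rw [hxdef]
    have : (0:ℝ) < m := by exact_mod_cast hm
    exact div_lt_self this (by linarith)
  have hkm : k < m := by
    have := (Nat.floor_lt hx0).2 hxm
    exact this
  -- set equality
  have hset : ((Finset.Icc 1 (3*m) ×ˢ Finset.Icc 1 (3*m)).filter
        (fun p : ℕ × ℕ =>
          3 * p.1 + 3 * p.2 = 3*m ∧ p.1 < 2 * p.2 ∧
            (p.1 : ℝ) < s * p.2)) =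
      (Finset.Ioc k (m-1)).image (fun a => (m - a, a)) := by
    ext p
    obtain ⟨A, a⟩ := p
    simp only [Finset.mem_filter, Finset.mem_product, Finset.mem_image, Finset.mem_Ioc,
      Finset.mem_Icc]
    constructor
    · rintro ⟨⟨⟨h11, h12⟩, h21, h22⟩, heq, hlt2, hlts⟩
      have hpm : A + a = m := by omega
      have hcast : (A:ℝ) + a = m := by exact_mod_cast hpm
      have hx_lt : x < a := by
        rw [hxdef, div_lt_iff₀ h1s]
        nlinarith
      have hka : k < a := (Nat.floor_lt hx0).2 hx_lt
      refine ⟨a, ⟨hka, by omega⟩, ?_⟩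
      have h1 : m - a = A := by omega
      rw [h1]
    · rintro ⟨b, ⟨hka, ham⟩, hba⟩
      have hA : m - b = A := congrArg Prod.fst hba
      have ha : b = a := congrArg Prod.snd hba
      subst ha
      subst hA
      have hb1 : 1 ≤ b := by omega
      have hbx : x < b := by
        have h1 : (k:ℝ) + 1 ≤ b := by exact_mod_cast hka
        have hxk1 : x < k + 1 := Nat.lt_floor_add_one x
        linarith
      have hmb : (1+s) * b > m := by
        rw [hxdef, div_lt_iff₀ h1s] at hbx
        linarith
      have h3b : m < 3 * b := by
        have : (m:ℝ) < 3 * b := by nlinarith [show (0:ℝ) < b by exact_mod_cast hb1]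
        exact_mod_cast this
      refine ⟨⟨⟨by omega, by omega⟩, by omega, by omega⟩, by omega, by omega, ?_⟩
      have hcast : ((m - b : ℕ) : ℝ) = (m:ℝ) - b := by
        have : b ≤ m := by omega
        push_cast [this]; ring
      rw [hcast]
      nlinarith
  rw [hset, Finset.card_image_of_injOn (fun a _ b _ h => congrArg Prod.snd h),
    Nat.card_Ioc]
  -- now show m - 1 - k = ⌊3m/(3+s)⌋
  have hval : ((3*m : ℕ):ℝ) / (3 + s) = m - x := by
    push_cast
    rw [hxdef]
    have h3s : (0:ℝ) < 3 + s := by linarith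
    field_simp
    nlinarith
  rw [hval]
  symm
  rw [Nat.floor_eq_iff (by linarith)]
  have hkm1 : k + 1 ≤ m := hkm
  have hcast : ((m - 1 - k : ℕ) : ℝ) = (m:ℝ) - 1 - k := by
    rw [Nat.cast_sub (by omega : k ≤ m - 1), Nat.cast_sub hm]
    push_cast; ring
  have hxk1 : x < k + 1 := Nat.lt_floor_add_one x
  rw [hcast]
  constructor
  · linarith
  · linarith
end

section
/- For n a positive even integer, the number of positive integer pairs (A, B) with 2A + 4B = n and A < √2 · B equals ⌊n/(4+4√2)⌋ if n ≡ 0 (mod 4), and ⌊(n+2+2√2)/(4+4√2)⌋ if n ≡ 2 (mod 4). -/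
/-!
Writing `A = n / 2 - 2 * B`, the admissible pairs correspond to the integers `B` with
`n / (4 + 2√2) < B ≤ (n - 2) / 4`, so there are `(n - 2) / 4 - ⌊n / (4 + 2√2)⌋` of them.
Since `1 / (4 + 2√2) + 1 / (4 + 4√2) = 1 / 4`, the irrational number `n / (4 + 2√2)` and the
argument of the floor on the right-hand side add up to the integer `(n - 2) / 4 + 1`, so their
floors add up to `(n - 2) / 4`.
-/

open Finset

section Floor

variable {R : Type*} [Ring R] [LinearOrder R] [IsStrictOrderedRing R] [FloorRing R]

theorem Int.floor_add_floor_add_one_of_add_eq_intCast {a b : R} {m : ℤ}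
    (ha : a ∉ Set.range Int.cast) (hab : a + b = m) : ⌊a⌋ + ⌊b⌋ + 1 = m := by
  have hb : b = -a + m := by rw [← hab]; abel
  rw [hb, Int.floor_add_intCast, Int.floor_neg, (Int.ceil_eq_floor_add_one_iff_notMem a).2 ha]
  ring

theorem Nat.floor_add_floor_add_one_of_add_eq_natCast {a b : R} {m : ℕ} (ha₀ : 0 ≤ a)
    (hb₀ : 0 ≤ b) (ha : a ∉ Set.range Int.cast) (hab : a + b = m) : ⌊a⌋₊ + ⌊b⌋₊ + 1 = m := by
  have h := Int.floor_add_floor_add_one_of_add_eq_intCast ha (m := m) (mod_cast hab)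
  rw [← Int.natCast_floor_eq_floor ha₀, ← Int.natCast_floor_eq_floor hb₀] at h
  omega

end Floor

theorem lt_mul_iff_floor_lt_of_two_mul_add_four_mul_eq {c : ℝ} (hc : 0 ≤ c) {a b n : ℕ}
    (h : 2 * a + 4 * b = n) : (a : ℝ) < c * b ↔ ⌊(n : ℝ) / (4 + 2 * c)⌋₊ < b := by
  rw [Nat.floor_lt (by positivity), div_lt_iff₀ (by positivity), ← h]
  push_cast
  constructor <;> intro <;> linarith

open scoped Classical in
theorem card_filter_two_mul_add_four_mul_eq_and_lt_mul {n : ℕ} (hn : 2 ∣ n) {c : ℝ} (hc : 0 ≤ c) :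
    ((Icc 1 n ×ˢ Icc 1 n).filter
        (fun p : ℕ × ℕ => 2 * p.1 + 4 * p.2 = n ∧ (p.1 : ℝ) < c * p.2)).card =
      (n - 2) / 4 - ⌊(n : ℝ) / (4 + 2 * c)⌋₊ := by
  rw [← Nat.card_Ioc]
  refine card_nbij' Prod.snd (fun b => (n / 2 - 2 * b, b)) ?_ ?_ ?_ ?_
  · rintro ⟨a, b⟩ hp
    simp only [coe_filter, mem_product, mem_Icc, Set.mem_ofPred_eq] at hp
    obtain ⟨⟨⟨ha, -⟩, -⟩, hsum, hlt⟩ := hp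
    have := (lt_mul_iff_floor_lt_of_two_mul_add_four_mul_eq hc hsum).1 hlt
    simp only [coe_Ioc, Set.mem_Ioc]
    omega
  · intro b hb
    simp only [coe_Ioc, Set.mem_Ioc] at hb
    have hsum : 2 * (n / 2 - 2 * b) + 4 * b = n := by omega
    simp only [coe_filter, mem_product, mem_Icc, Set.mem_ofPred_eq]
    exact ⟨by omega, hsum, (lt_mul_iff_floor_lt_of_two_mul_add_four_mul_eq hc hsum).2 hb.1⟩
  · rintro ⟨a, b⟩ hp
    simp only [coe_filter, Set.mem_ofPred_eq] at hp
    simp only [Prod.mk.injEq, and_true]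
    omega
  · intro b _
    rfl

theorem irrational_natCast_div_four_add_two_mul_sqrt_two {n : ℕ} (hn : n ≠ 0) :
    Irrational ((n : ℝ) / (4 + 2 * √2)) := by
  simpa using ((irrational_sqrt_two.natCast_mul two_ne_zero).natCast_add 4).natCast_div hn

theorem div_four_add_two_mul_sqrt_two_add_div_four_add_four_mul_sqrt_two (t : ℝ) :
    t / (4 + 2 * √2) + t / (4 + 4 * √2) = t / 4 := by
  have h2 : √2 ^ 2 = 2 := Real.sq_sqrt zero_le_two
  field_simp
  linear_combination (-2 * t) * h2

theorem two_add_two_mul_sqrt_two_div_four_add_four_mul_sqrt_two :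
    (2 + 2 * √2) / (4 + 4 * √2) = 1 / 2 := by
  field_simp
  ring

open scoped Classical in
theorem count_four_cycle_fixed (n : ℕ) (hn : 0 < n) (he : 2 ∣ n) :
    ((Finset.Icc 1 n ×ˢ Finset.Icc 1 n).filter
        (fun p : ℕ × ℕ =>
          2 * p.1 + 4 * p.2 = n ∧ (p.1 : ℝ) < Real.sqrt 2 * p.2)).card =
      if n % 4 = 0 then ⌊(n : ℝ) / (4 + 4 * Real.sqrt 2)⌋₊
      else ⌊((n : ℝ) + 2 + 2 * Real.sqrt 2) / (4 + 4 * Real.sqrt 2)⌋₊ := by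
  rw [card_filter_two_mul_add_four_mul_eq_and_lt_mul he (Real.sqrt_nonneg 2)]
  have hx : (n : ℝ) / (4 + 2 * √2) ∉ Set.range Int.cast := fun ⟨m, hm⟩ =>
    (irrational_natCast_div_four_add_two_mul_sqrt_two hn.ne').ne_int m hm.symm
  split_ifs with h4
  · obtain ⟨k, rfl⟩ : ∃ k, n = 4 * k + 4 := ⟨n / 4 - 1, by omega⟩
    have hm : ((4 * k + 4 : ℕ) : ℝ) / (4 + 2 * √2) + (4 * k + 4 : ℕ) / (4 + 4 * √2) =
        (k + 1 : ℕ) := by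
      rw [div_four_add_two_mul_sqrt_two_add_div_four_add_four_mul_sqrt_two]; push_cast; ring
    have hfloor := Nat.floor_add_floor_add_one_of_add_eq_natCast (by positivity) (by positivity) hx hm
    omega
  · obtain ⟨k, rfl⟩ : ∃ k, n = 4 * k + 2 := ⟨n / 4, by omega⟩
    have hy : (((4 * k + 2 : ℕ) : ℝ) + 2 + 2 * √2) / (4 + 4 * √2) =
        (4 * k + 2 : ℕ) / (4 + 4 * √2) + 1 / 2 := by
      rw [add_assoc, add_div, two_add_two_mul_sqrt_two_div_four_add_four_mul_sqrt_two]
    have hm : ((4 * k + 2 : ℕ) : ℝ) / (4 + 2 * √2) + (((4 * k + 2 : ℕ) : ℝ) + 2 + 2 * √2) /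
        (4 + 4 * √2) = (k + 1 : ℕ) := by
      rw [hy, ← add_assoc, div_four_add_two_mul_sqrt_two_add_div_four_add_four_mul_sqrt_two]
      push_cast; ring
    have hfloor := Nat.floor_add_floor_add_one_of_add_eq_natCast (by positivity) (by positivity) hx hm
    omega
end

section
/- For every positive integer d, the number of integer tetrahedra with diameter d and perimeter 3d + 4, up to congruence, equals d − 1. -/
/-- `v` has diameter `d`: the maximum of the six edge lengths is `d`. -/
def TetraDiam (v : Fin 4 → EuclideanSpace ℝ (Fin 3)) (d : ℕ) : Prop :=
  (∃ i j : Fin 4, dist (v i) (v j) = (d : ℝ)) ∧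
    ∀ i j : Fin 4, dist (v i) (v j) ≤ (d : ℝ)

/-- Two tetrahedra are congruent if after a permutation of the vertices all
corresponding edge lengths agree. -/
def TetraCongruent (v w : Fin 4 → EuclideanSpace ℝ (Fin 3)) : Prop :=
  ∃ σ : Equiv.Perm (Fin 4), ∀ i j : Fin 4, dist (w i) (w j) = dist (v (σ i)) (v (σ j))

/-- The number of integer tetrahedra of perimeter `n` and diameter `d`,
up to congruence. -/
noncomputable def tetraCount (n d : ℕ) : ℕ :=
  Nat.card (Quot (fun v w : {v : Fin 4 → EuclideanSpace ℝ (Fin 3) //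
    IsIntegerTetrahedron v ∧ TetraPerim v n ∧ TetraDiam v d} =>
      TetraCongruent v.1 w.1))

/-!
Label a tetrahedron with diameter `d` so that `|01| = d`, and write `B, b` for `|02|, |03|`,
`C, c` for `|12|, |13|` and `a` for `|23|`. The faces `012` and `013` are non-degenerate, so
`B + C` and `b + c` are at least `d + 1`; perimeter `3d + 4` leaves `a ≤ 2`. In the faces
through `23` the triangle inequality forces `|B - b| < a` and `|C - c| < a`, so `a = 1` would
give `B + C = b + c`, contradicting the parity of the perimeter. Hence `a = 2`,
`B + C = b + c = d + 1` and `|B - b| ≤ 1`. Using the symmetries `0 ↔ 1` and `2 ↔ 3` the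
tetrahedron becomes a normal form determined by `k = B + b ∈ [3, d + 1]`, and the sum of the
squared vertex perimeters separates different `k`, which gives `d - 1` classes.

Each normal form is realised by hinging: the apexes `2` and `3` of the two triangles over
`01` are rotated about the line `01` until they are at distance `2`, which happens at a
non-degenerate dihedral angle.
-/

open Finset

section TetraEdges

variable {α : Type*}

def tetraEdges [Zero α] (e₀₁ e₀₂ e₀₃ e₁₂ e₁₃ e₂₃ : α) : Fin 4 → Fin 4 → α :=
  ![![0, e₀₁, e₀₂, e₀₃], ![e₀₁, 0, e₁₂, e₁₃], ![e₀₂, e₁₂, 0, e₂₃], ![e₀₃, e₁₃, e₂₃, 0]]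

lemma eq_tetraEdges [Zero α] {e : Fin 4 → Fin 4 → α} (hsymm : ∀ i j, e i j = e j i)
    (hself : ∀ i, e i i = 0) :
    e = tetraEdges (e 0 1) (e 0 2) (e 0 3) (e 1 2) (e 1 3) (e 2 3) := by
  ext i j
  fin_cases i <;> fin_cases j <;>
    simp [tetraEdges, hself, hsymm 1 0, hsymm 2 0, hsymm 3 0, hsymm 2 1, hsymm 3 1, hsymm 3 2]

lemma dist_eq_tetraEdges {P : Type*} [PseudoMetricSpace P] (v : Fin 4 → P) (i j : Fin 4) :
    dist (v i) (v j) = tetraEdges (dist (v 0) (v 1)) (dist (v 0) (v 2))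
      (dist (v 0) (v 3)) (dist (v 1) (v 2)) (dist (v 1) (v 3)) (dist (v 2) (v 3)) i j :=
  congrFun₂ (eq_tetraEdges (e := fun i j => dist (v i) (v j)) (fun _ _ => dist_comm _ _)
    (fun _ => dist_self _)) i j

@[norm_cast]
lemma Nat.cast_tetraEdges [AddMonoidWithOne α] (e₀₁ e₀₂ e₀₃ e₁₂ e₁₃ e₂₃ : ℕ) (i j : Fin 4) :
    ((tetraEdges e₀₁ e₀₂ e₀₃ e₁₂ e₁₃ e₂₃ i j : ℕ) : α) =
      tetraEdges (e₀₁ : α) e₀₂ e₀₃ e₁₂ e₁₃ e₂₃ i j := by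
  fin_cases i <;> fin_cases j <;> simp [tetraEdges]

lemma tetraEdges_swap_zero_one [Zero α] (e₀₁ e₀₂ e₀₃ e₁₂ e₁₃ e₂₃ : α) (i j : Fin 4) :
    tetraEdges e₀₁ e₀₂ e₀₃ e₁₂ e₁₃ e₂₃ (Equiv.swap 0 1 i) (Equiv.swap 0 1 j) =
      tetraEdges e₀₁ e₁₂ e₁₃ e₀₂ e₀₃ e₂₃ i j := by
  fin_cases i <;> fin_cases j <;> simp [tetraEdges, Equiv.swap_apply_of_ne_of_ne]

lemma tetraEdges_swap_two_three [Zero α] (e₀₁ e₀₂ e₀₃ e₁₂ e₁₃ e₂₃ : α) (i j : Fin 4) :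
    tetraEdges e₀₁ e₀₂ e₀₃ e₁₂ e₁₃ e₂₃ (Equiv.swap 2 3 i) (Equiv.swap 2 3 j) =
      tetraEdges e₀₁ e₀₃ e₀₂ e₁₃ e₁₂ e₂₃ i j := by
  fin_cases i <;> fin_cases j <;> simp [tetraEdges, Equiv.swap_apply_of_ne_of_ne]

lemma sum_sum_tetraEdges [Semiring α] (e₀₁ e₀₂ e₀₃ e₁₂ e₁₃ e₂₃ : α) :
    ∑ i, ∑ j, tetraEdges e₀₁ e₀₂ e₀₃ e₁₂ e₁₃ e₂₃ i j =
      2 * (e₀₁ + e₀₂ + e₀₃ + e₁₂ + e₁₃ + e₂₃) := by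
  simp only [tetraEdges, Fin.sum_univ_four, Matrix.cons_val', Matrix.cons_val_fin_one,
    Matrix.cons_val_zero, Matrix.cons_val_one, Matrix.cons_val, zero_add, add_zero]
  rw [two_mul]
  abel

end TetraEdges

/-- The normal form with parameter `k`: diameter `01`, `|23| = 2`, `|02| = ⌊k/2⌋ ≤ |03| = ⌈k/2⌉`
and `|02| + |12| = |03| + |13| = d + 1`; vertex `0` has perimeter `d + k`. -/
def normalEdges (d k : ℕ) : Fin 4 → Fin 4 → ℕ :=
  tetraEdges d (k / 2) ((k + 1) / 2) (d + 1 - k / 2) (d + 1 - (k + 1) / 2) 2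

lemma normalEdges_pos {d k : ℕ} (hk : k ∈ Icc 3 (d + 1)) {i j : Fin 4} (hij : i ≠ j) :
    0 < normalEdges d k i j := by
  rw [mem_Icc] at hk
  fin_cases i <;> fin_cases j <;> simp [normalEdges, tetraEdges] at hij ⊢ <;> omega

lemma normalEdges_le {d k : ℕ} (hk : k ∈ Icc 3 (d + 1)) (i j : Fin 4) :
    normalEdges d k i j ≤ d := by
  rw [mem_Icc] at hk
  fin_cases i <;> fin_cases j <;> simp [normalEdges, tetraEdges] <;> omega

lemma sum_sq_sum_normalEdges {d k : ℕ} (hk : k ≤ d + 1) :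
    ∑ i, (∑ j, normalEdges d k i j) ^ 2 =
      2 * ((2 * d + 1) ^ 2 + (d + 1 - k) ^ 2 + (d + 3) ^ 2) := by
  simp only [normalEdges, tetraEdges, Fin.sum_univ_four, Matrix.cons_val', Matrix.cons_val_fin_one,
    Matrix.cons_val_zero, Matrix.cons_val_one, Matrix.cons_val, zero_add, add_zero]
  obtain ⟨m, hm⟩ : ∃ m, d + 1 = k + m := ⟨d + 1 - k, by omega⟩
  rw [show d + k / 2 + (k + 1) / 2 = d + k by omega,
    show d + (d + 1 - k / 2) + (d + 1 - (k + 1) / 2) = d + k + 2 * m by omega,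
    show k / 2 + (d + 1 - k / 2) + 2 = d + 3 by omega,
    show (k + 1) / 2 + (d + 1 - (k + 1) / 2) + 2 = d + 3 by omega,
    show d + 1 - k = m by omega, show 2 * d + 1 = d + k + m by omega]
  ring

lemma exists_perm_tetraEdges_eq_normalEdges {d B b C c : ℕ} (hBC : B + C = d + 1)
    (hbc : b + c = d + 1) (hbB : b ≤ B + 1) (hBb : B ≤ b + 1) (hBb₂ : 2 < B + b)
    (hCc₂ : 2 < C + c) :
    ∃ σ : Equiv.Perm (Fin 4), ∃ k ∈ Icc 3 (d + 1),
      ∀ i j, tetraEdges d B b C c 2 (σ i) (σ j) = normalEdges d k i j := by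
  wlog hrow : B + b ≤ C + c generalizing B b C c
  · obtain ⟨σ, k, hk, hσ⟩ := this (B := C) (b := c) (C := B) (c := b) (by omega) (by omega)
      (by omega) (by omega) hCc₂ hBb₂ (by omega)
    exact ⟨Equiv.swap 0 1 * σ, k, hk, fun i j => by
      rw [Equiv.Perm.mul_apply, Equiv.Perm.mul_apply, tetraEdges_swap_zero_one, hσ]⟩
  wlog hle : B ≤ b generalizing B b C c
  · obtain ⟨σ, k, hk, hσ⟩ := this (B := b) (b := B) (C := c) (c := C) (by omega) (by omega)
      (by omega) (by omega) (by omega) (by omega) (by omega) (by omega)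
    exact ⟨Equiv.swap 2 3 * σ, k, hk, fun i j => by
      rw [Equiv.Perm.mul_apply, Equiv.Perm.mul_apply, tetraEdges_swap_two_three, hσ]⟩
  refine ⟨1, B + b, mem_Icc.2 ⟨by omega, by omega⟩, fun i j => ?_⟩
  have hB : (B + b) / 2 = B := by omega
  have hb : (B + b + 1) / 2 = b := by omega
  simp only [Equiv.Perm.one_apply, normalEdges, hB, hb]
  congr <;> omega

lemma exists_perm_eq_normalEdges {d : ℕ} {e : Fin 4 → Fin 4 → ℕ} (hsymm : ∀ i j, e i j = e j i)
    (hself : ∀ i, e i i = 0)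
    (htri : ∀ i j k, Function.Injective ![i, j, k] → e i k < e i j + e j k)
    (h01 : e 0 1 = d) (hsum : ∑ i, ∑ j, e i j = 2 * (3 * d + 4)) :
    ∃ σ : Equiv.Perm (Fin 4), ∃ k ∈ Icc 3 (d + 1),
      ∀ i j, e (σ i) (σ j) = normalEdges d k i j := by
  rw [eq_tetraEdges hsymm hself] at htri hsum ⊢
  rw [sum_sum_tetraEdges] at hsum
  set B := e 0 2
  set b := e 0 3
  set C := e 1 2
  set c := e 1 3
  set a := e 2 3
  have h012 : e 0 1 < B + C := htri 0 2 1 (by decide)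
  have h013 : e 0 1 < b + c := htri 0 3 1 (by decide)
  have h023₁ : a < B + b := htri 2 0 3 (by decide)
  have h023₂ : B < b + a := htri 0 3 2 (by decide)
  have h023₃ : b < B + a := htri 0 2 3 (by decide)
  have h123₁ : a < C + c := htri 2 1 3 (by decide)
  have h123₂ : C < c + a := htri 1 3 2 (by decide)
  have h123₃ : c < C + a := htri 1 2 3 (by decide)
  have ha : a = 2 := by omega
  rw [h01, ha]
  exact exists_perm_tetraEdges_eq_normalEdges (by omega) (by omega) (by omega) (by omega)
    (by omega) (by omega)

lemma EuclideanSpace.dist_fin_three (a b c x y z : ℝ) :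
    dist !₂[a, b, c] !₂[x, y, z] = √((a - x) ^ 2 + (b - y) ^ 2 + (c - z) ^ 2) := by
  simp [EuclideanSpace.dist_eq, Fin.sum_univ_three, Real.dist_eq, sq_abs]

lemma affineIndependent_triangular {D x y x' y' z : ℝ} (hD : D ≠ 0) (hy : y ≠ 0) (hz : z ≠ 0) :
    AffineIndependent ℝ ![!₂[0, 0, 0], !₂[D, 0, 0], !₂[x, y, 0], !₂[x', y', z]] := by
  rw [affineIndependent_iff_of_fintype]
  intro w hw hsum
  rw [Finset.weightedVSub_eq_linear_combination _ hw] at hsum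
  have h l := congrArg (fun v : EuclideanSpace ℝ (Fin 3) => v l) hsum
  simp only [Fin.sum_univ_four] at h hw
  have w₃ : w 3 = 0 := (mul_eq_zero.1 (by simpa using h 2)).resolve_right hz
  have w₂ : w 2 = 0 := (mul_eq_zero.1 (by simpa [w₃] using h 1)).resolve_right hy
  have w₁ : w 1 = 0 := (mul_eq_zero.1 (by simpa [w₂, w₃] using h 0)).resolve_right hD
  have w₀ : w 0 = 0 := by linear_combination hw - w₁ - w₂ - w₃
  intro i
  fin_cases i
  exacts [w₀, w₁, w₂, w₃]

/-- Put `0, 1` on the first axis and `2` in the plane of the first two axes, at height `√p`;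
then rotate `3`, at distance `√q` from the first axis, about that axis until `|23| = a`.
The hypothesis `h` says that the cosine of the required rotation angle lies in `(-1, 1)`. -/
lemma exists_affineIndependent_dist_eq_tetraEdges {D B b C c a x p x' q : ℝ} (hD : 0 < D)
    (hB : 0 ≤ B) (hb : 0 ≤ b) (hC : 0 ≤ C) (hc : 0 ≤ c) (ha : 0 ≤ a)
    (hxB : x ^ 2 + p = B ^ 2) (hxC : (D - x) ^ 2 + p = C ^ 2)
    (hxb : x' ^ 2 + q = b ^ 2) (hxc : (D - x') ^ 2 + q = c ^ 2) (hp : 0 < p)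
    (h : ((x - x') ^ 2 + p + q - a ^ 2) ^ 2 < 4 * p * q) :
    ∃ v : Fin 4 → EuclideanSpace ℝ (Fin 3), AffineIndependent ℝ v ∧
      ∀ i j, dist (v i) (v j) = tetraEdges D B b C c a i j := by
  have hq : 0 < q := pos_of_mul_pos_right
    (by nlinarith [sq_nonneg ((x - x') ^ 2 + p + q - a ^ 2)]) (by positivity : (0 : ℝ) ≤ 4 * p)
  obtain ⟨y, hy, rfl⟩ : ∃ y, 0 < y ∧ y ^ 2 = p := ⟨√p, Real.sqrt_pos.2 hp, Real.sq_sqrt hp.le⟩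
  obtain ⟨y', hy', rfl⟩ : ∃ y', 0 < y' ∧ y' ^ 2 = q :=
    ⟨√q, Real.sqrt_pos.2 hq, Real.sq_sqrt hq.le⟩
  set γ := ((x - x') ^ 2 + y ^ 2 + y' ^ 2 - a ^ 2) / (2 * y * y')
  have hγ : 2 * y * y' * γ = (x - x') ^ 2 + y ^ 2 + y' ^ 2 - a ^ 2 :=
    mul_div_cancel₀ _ (by positivity)
  have hγ₁ : γ ^ 2 < 1 := by
    rw [div_pow, div_lt_one (by positivity)]
    nlinarith
  obtain ⟨σ, hσ, hσγ⟩ : ∃ σ, 0 < σ ∧ σ ^ 2 = 1 - γ ^ 2 :=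
    ⟨√(1 - γ ^ 2), Real.sqrt_pos.2 (by linarith), Real.sq_sqrt (by linarith)⟩
  refine ⟨![!₂[0, 0, 0], !₂[D, 0, 0], !₂[x, y, 0], !₂[x', y' * γ, y' * σ]],
    affineIndependent_triangular hD.ne' hy.ne' (by positivity), fun i j => ?_⟩
  rw [dist_eq_tetraEdges]
  congr 1 <;> simp only [Matrix.cons_val_zero, Matrix.cons_val_one, Matrix.cons_val_two,
    Matrix.cons_val_three, Matrix.tail_cons, Matrix.head_cons, EuclideanSpace.dist_fin_three]
  · convert Real.sqrt_sq hD.le using 2; ring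
  · convert Real.sqrt_sq hB using 2; linear_combination hxB
  · convert Real.sqrt_sq hb using 2; linear_combination hxb + y' ^ 2 * hσγ
  · convert Real.sqrt_sq hC using 2; linear_combination hxC
  · convert Real.sqrt_sq hc using 2; linear_combination hxc + y' ^ 2 * hσγ
  · convert Real.sqrt_sq ha using 2; linear_combination y' ^ 2 * hσγ - hγ

lemma exists_triangle_apex {D : ℝ} (hD : D ≠ 0) (B C : ℝ) :
    ∃ x p : ℝ, x ^ 2 + p = B ^ 2 ∧ (D - x) ^ 2 + p = C ^ 2 ∧
      2 * D * x = D ^ 2 + B ^ 2 - C ^ 2 ∧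
      4 * D ^ 2 * p = (B + C + D) * (B + C - D) * (D + B - C) * (D - B + C) := by
  refine ⟨(D ^ 2 + B ^ 2 - C ^ 2) / (2 * D), B ^ 2 - ((D ^ 2 + B ^ 2 - C ^ 2) / (2 * D)) ^ 2,
    by ring, ?_, by field_simp, ?_⟩ <;> field_simp <;> ring

lemma exists_affineIndependent_dist_eq_tetraEdges_of_eq {d B C : ℝ} (hBC : B + C = d + 1)
    (hB : 2 ≤ B) (hC : 2 ≤ C) :
    ∃ v : Fin 4 → EuclideanSpace ℝ (Fin 3), AffineIndependent ℝ v ∧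
      ∀ i j, dist (v i) (v j) = tetraEdges d B B C C 2 i j := by
  obtain rfl : d = B + C - 1 := by linarith
  have hd : 0 < B + C - 1 := by linarith
  obtain ⟨x, p, hxB, hxC, -, hp⟩ := exists_triangle_apex hd.ne' B C
  have hp₁ : 1 < p := by
    have : 4 * (B + C - 1) ^ 2 < 4 * (B + C - 1) ^ 2 * p := by
      rw [hp]
      nlinarith [mul_nonneg (sub_nonneg.2 hB) (sub_nonneg.2 hC)]
    nlinarith
  exact exists_affineIndependent_dist_eq_tetraEdges hd (by linarith) (by linarith) (by linarith)
    (by linarith) zero_le_two hxB hxC hxB hxC (by linarith) (by nlinarith)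

/-- Certificate: the difference of the two sides is
`16 d² (11 d² - 10 d - 10 + 12 (2 d + 1) (B - 1) (c - 1))`. -/
lemma hinge_condition_of_succ {d B c : ℝ} (hBc : B + c = d) (hB : 1 ≤ B) (hc : 1 ≤ c) :
    (4 * (d + 1) ^ 2 + (2 * d + 1) * (2 * B - 1) * (2 * c + 1) +
      (2 * d + 1) * (2 * B + 1) * (2 * c - 1) - 16 * d ^ 2) ^ 2 <
    4 * ((2 * d + 1) * (2 * B - 1) * (2 * c + 1)) * ((2 * d + 1) * (2 * B + 1) * (2 * c - 1)) := by
  have hd : 2 ≤ d := by linarith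
  have h : 0 < 16 * d ^ 2 *
      (11 * d ^ 2 - 10 * d - 10 + 12 * (2 * d + 1) * (B - 1) * (c - 1)) := by
    have : 0 ≤ (2 * d + 1) * (B - 1) * (c - 1) :=
      mul_nonneg (mul_nonneg (by linarith) (by linarith)) (by linarith)
    have : 0 < 11 * d ^ 2 - 10 * d - 10 := by nlinarith
    exact mul_pos (by positivity) (by linarith)
  subst hBc
  linarith

lemma exists_affineIndependent_dist_eq_tetraEdges_of_succ {d B c : ℝ} (hBc : B + c = d)
    (hB : 1 ≤ B) (hc : 1 ≤ c) :
    ∃ v : Fin 4 → EuclideanSpace ℝ (Fin 3), AffineIndependent ℝ v ∧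
      ∀ i j, dist (v i) (v j) = tetraEdges d B (B + 1) (c + 1) c 2 i j := by
  have hd : 0 < d := by linarith
  obtain ⟨x, p, hxB, hxC, hx, hp⟩ := exists_triangle_apex hd.ne' B (c + 1)
  obtain ⟨x', q, hxb, hxc, hx', hq⟩ := exists_triangle_apex hd.ne' (B + 1) c
  have hp' : 4 * d ^ 2 * p = (2 * d + 1) * (2 * B - 1) * (2 * c + 1) := by rw [hp, ← hBc]; ring
  have hq' : 4 * d ^ 2 * q = (2 * d + 1) * (2 * B + 1) * (2 * c - 1) := by rw [hq, ← hBc]; ring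
  have hp₀ : 0 < p := by
    have : 0 < (2 * d + 1) * (2 * B - 1) * (2 * c + 1) :=
      mul_pos (mul_pos (by linarith) (by linarith)) (by linarith)
    rw [← hp'] at this
    exact pos_of_mul_pos_right this (by positivity)
  have hxx' : 2 * d * (x - x') = -2 * (d + 1) := by linear_combination hx - hx' - 2 * hBc
  have hscale : 4 * d ^ 2 * ((x - x') ^ 2 + p + q - 2 ^ 2) =
      4 * (d + 1) ^ 2 + 4 * d ^ 2 * p + 4 * d ^ 2 * q - 16 * d ^ 2 := by
    linear_combination (2 * d * (x - x') - 2 * (d + 1)) * hxx'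
  have hpq : (4 * d ^ 2) ^ 2 * ((x - x') ^ 2 + p + q - 2 ^ 2) ^ 2 <
      (4 * d ^ 2) ^ 2 * (4 * p * q) := by
    have := hinge_condition_of_succ hBc hB hc
    rw [← hp', ← hq', ← hscale] at this
    convert this using 1 <;> ring
  exact exists_affineIndependent_dist_eq_tetraEdges hd (by linarith) (by linarith) (by linarith)
    (by linarith) zero_le_two hxB hxC hxb hxc hp₀ (lt_of_mul_lt_mul_left hpq (by positivity))

lemma exists_affineIndependent_dist_eq_normalEdges {d k : ℕ} (hk : k ∈ Icc 3 (d + 1)) :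
    ∃ v : Fin 4 → EuclideanSpace ℝ (Fin 3), AffineIndependent ℝ v ∧
      ∀ i j, dist (v i) (v j) = normalEdges d k i j := by
  rw [mem_Icc] at hk
  obtain ⟨B, rfl | rfl⟩ := Nat.even_or_odd' k
  · have hN : normalEdges d (2 * B) = tetraEdges d B B (d + 1 - B) (d + 1 - B) 2 := by
      simp only [normalEdges]; congr 1 <;> omega
    obtain ⟨v, hv, hdist⟩ := exists_affineIndependent_dist_eq_tetraEdges_of_eq (d := d) (B := B)
      (C := (d + 1 - B : ℕ)) (by exact_mod_cast (show B + (d + 1 - B) = d + 1 by omega))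
      (by exact_mod_cast (show 2 ≤ B by omega)) (by exact_mod_cast (show 2 ≤ d + 1 - B by omega))
    refine ⟨v, hv, fun i j => ?_⟩
    rw [hdist, hN]
    norm_cast
  · have hN : normalEdges d (2 * B + 1) = tetraEdges d B (B + 1) (d - B + 1) (d - B) 2 := by
      simp only [normalEdges]; congr 1 <;> omega
    obtain ⟨v, hv, hdist⟩ := exists_affineIndependent_dist_eq_tetraEdges_of_succ (d := d)
      (B := B) (c := (d - B : ℕ)) (by exact_mod_cast (show B + (d - B) = d by omega))
      (by exact_mod_cast (show 1 ≤ B by omega)) (by exact_mod_cast (show 1 ≤ d - B by omega))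
    refine ⟨v, hv, fun i j => ?_⟩
    rw [hdist, hN]
    norm_cast

section EdgeLength

variable {ι P : Type*} [PseudoMetricSpace P]

noncomputable def edgeLength (v : ι → P) (i j : ι) : ℕ :=
  ⌊dist (v i) (v j)⌋₊

lemma edgeLength_comm (v : ι → P) (i j : ι) : edgeLength v i j = edgeLength v j i := by
  rw [edgeLength, dist_comm, edgeLength]

@[simp]
lemma edgeLength_self (v : ι → P) (i : ι) : edgeLength v i i = 0 := by
  simp [edgeLength]

end EdgeLength

lemma IsIntegerTetrahedron.dist_eq_edgeLength {v : Fin 4 → EuclideanSpace ℝ (Fin 3)}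
    (hv : IsIntegerTetrahedron v) (i j : Fin 4) : dist (v i) (v j) = edgeLength v i j := by
  by_cases hij : i = j
  · simp [hij]
  · obtain ⟨m, -, hm⟩ := hv.2 i j hij
    simp [edgeLength, hm]

lemma tetraPerim_iff_of_dist_eq {v : Fin 4 → EuclideanSpace ℝ (Fin 3)} {e : Fin 4 → Fin 4 → ℕ}
    (h : ∀ i j, dist (v i) (v j) = e i j) (n : ℕ) :
    TetraPerim v n ↔ ∑ i, ∑ j, e i j = 2 * n := by
  simp only [TetraPerim, h]
  norm_cast

lemma tetraDiam_iff_of_dist_eq {v : Fin 4 → EuclideanSpace ℝ (Fin 3)} {e : Fin 4 → Fin 4 → ℕ}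
    (h : ∀ i j, dist (v i) (v j) = e i j) (d : ℕ) :
    TetraDiam v d ↔ (∃ i j, e i j = d) ∧ ∀ i j, e i j ≤ d := by
  simp [TetraDiam, h]

lemma TetraPerim.comp_perm {v : Fin 4 → EuclideanSpace ℝ (Fin 3)} {n : ℕ} (h : TetraPerim v n)
    (τ : Equiv.Perm (Fin 4)) : TetraPerim (v ∘ τ) n := by
  rw [TetraPerim, ← h]
  exact Fintype.sum_equiv τ _ _ fun i => Fintype.sum_equiv τ _ _ fun j => rfl

lemma Equiv.Perm.exists_apply_eq_and_apply_eq {α : Type*} [DecidableEq α] {a b x y : α}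
    (hab : a ≠ b) (hxy : x ≠ y) : ∃ τ : Equiv.Perm α, τ a = x ∧ τ b = y := by
  have hb : Equiv.swap a x b ≠ x := by
    rw [Ne, Equiv.swap_apply_eq_iff, Equiv.swap_apply_right]
    exact hab.symm
  refine ⟨Equiv.swap (Equiv.swap a x b) y * Equiv.swap a x, ?_, ?_⟩
  · rw [Equiv.Perm.mul_apply, Equiv.swap_apply_left, Equiv.swap_apply_of_ne_of_ne hb.symm hxy]
  · rw [Equiv.Perm.mul_apply, Equiv.swap_apply_left]

lemma IsIntegerTetrahedron.exists_perm_dist_eq_normalEdges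
    {v : Fin 4 → EuclideanSpace ℝ (Fin 3)} {d : ℕ} (hv : IsIntegerTetrahedron v)
    (hP : TetraPerim v (3 * d + 4)) (hD : TetraDiam v d) :
    ∃ σ : Equiv.Perm (Fin 4), ∃ k ∈ Icc 3 (d + 1),
      ∀ i j, dist (v (σ i)) (v (σ j)) = normalEdges d k i j := by
  obtain ⟨⟨i₀, j₀, h₀⟩, hle⟩ := hD
  have hd : (0 : ℝ) < d := by
    obtain ⟨m, hm, h01⟩ := hv.2 0 1 (by decide)
    exact (h01 ▸ Nat.cast_pos.2 hm).trans_le (hle 0 1)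
  have hne : i₀ ≠ j₀ := by
    rintro rfl
    rw [dist_self] at h₀
    exact hd.ne h₀
  obtain ⟨τ, rfl, rfl⟩ := Equiv.Perm.exists_apply_eq_and_apply_eq (zero_ne_one' (Fin 4)) hne
  have hw : IsIntegerTetrahedron (v ∘ τ) :=
    ⟨hv.1.comp_embedding τ.toEmbedding, fun i j hij => hv.2 _ _ (τ.injective.ne hij)⟩
  have hdist := hw.dist_eq_edgeLength
  obtain ⟨σ, k, hk, hσ⟩ := exists_perm_eq_normalEdges (edgeLength_comm _) (edgeLength_self _)
    (fun i j k hijk => by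
      have := dist_lt_dist_add_dist_iff.2 (hw.1.not_wbtw_of_injective i j k hijk)
      rw [hdist, hdist, hdist] at this
      exact_mod_cast this)
    (by exact_mod_cast (hdist 0 1).symm.trans h₀)
    ((tetraPerim_iff_of_dist_eq hdist _).1 (hP.comp_perm τ))
  refine ⟨τ * σ, k, hk, fun i j => ?_⟩
  simpa [hσ] using hdist (σ i) (σ j)

lemma exists_isIntegerTetrahedron_dist_eq_normalEdges {d k : ℕ} (hk : k ∈ Icc 3 (d + 1)) :
    ∃ v : Fin 4 → EuclideanSpace ℝ (Fin 3),
      (IsIntegerTetrahedron v ∧ TetraPerim v (3 * d + 4) ∧ TetraDiam v d) ∧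
      ∀ i j, dist (v i) (v j) = normalEdges d k i j := by
  obtain ⟨v, hv, hdist⟩ := exists_affineIndependent_dist_eq_normalEdges hk
  refine ⟨v, ⟨⟨hv, fun i j hij => ⟨_, normalEdges_pos hk hij, hdist i j⟩⟩,
    (tetraPerim_iff_of_dist_eq hdist _).2 ?_,
    (tetraDiam_iff_of_dist_eq hdist _).2 ⟨⟨0, 1, rfl⟩, normalEdges_le hk⟩⟩, hdist⟩
  rw [normalEdges, sum_sum_tetraEdges]
  rw [mem_Icc] at hk
  omega

noncomputable def vertexPerimSqSum {P : Type*} [PseudoMetricSpace P] (v : Fin 4 → P) : ℝ :=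
  ∑ i, (∑ j, dist (v i) (v j)) ^ 2

lemma TetraCongruent.vertexPerimSqSum_eq {v w : Fin 4 → EuclideanSpace ℝ (Fin 3)}
    (h : TetraCongruent v w) : vertexPerimSqSum w = vertexPerimSqSum v := by
  obtain ⟨σ, hσ⟩ := h
  simp only [vertexPerimSqSum, hσ]
  exact Fintype.sum_equiv σ _ _ fun i => congrArg (· ^ 2) (Fintype.sum_equiv σ _ _ fun j => rfl)

lemma vertexPerimSqSum_eq_of_dist_eq_normalEdges {P : Type*} [PseudoMetricSpace P]
    {v : Fin 4 → P} {d k : ℕ} (hk : k ≤ d + 1)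
    (h : ∀ i j, dist (v i) (v j) = normalEdges d k i j) :
    vertexPerimSqSum v = (2 * ((2 * d + 1) ^ 2 + (d + 1 - k) ^ 2 + (d + 3) ^ 2) : ℕ) := by
  simp only [vertexPerimSqSum, h]
  exact_mod_cast sum_sq_sum_normalEdges hk

lemma eq_of_vertexPerimSqSum_eq {P : Type*} [PseudoMetricSpace P] {v w : Fin 4 → P}
    {d k k' : ℕ} (hk : k ≤ d + 1) (hk' : k' ≤ d + 1)
    (hv : ∀ i j, dist (v i) (v j) = normalEdges d k i j)
    (hw : ∀ i j, dist (w i) (w j) = normalEdges d k' i j)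
    (h : vertexPerimSqSum v = vertexPerimSqSum w) : k = k' := by
  rw [vertexPerimSqSum_eq_of_dist_eq_normalEdges hk hv,
    vertexPerimSqSum_eq_of_dist_eq_normalEdges hk' hw, Nat.cast_inj] at h
  have := Nat.pow_left_injective two_ne_zero (by omega : (d + 1 - k) ^ 2 = (d + 1 - k') ^ 2)
  omega

theorem tetraCount_perim_3d_add_4_general (d : ℕ) :
    tetraCount (3 * d + 4) d = d - 1 := by
  choose T hT hdist using fun k : Icc 3 (d + 1) =>
    exists_isIntegerTetrahedron_dist_eq_normalEdges k.2
  let G (k : Icc 3 (d + 1)) : Quot (fun v w : {v : Fin 4 → EuclideanSpace ℝ (Fin 3) //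
      IsIntegerTetrahedron v ∧ TetraPerim v (3 * d + 4) ∧ TetraDiam v d} =>
      TetraCongruent v.1 w.1) := Quot.mk _ ⟨T k, hT k⟩
  have hG : Function.Bijective G := by
    refine ⟨fun k k' hkk' => Subtype.ext ?_, ?_⟩
    · have h := congrArg (Quot.lift (fun v => vertexPerimSqSum v.1)
        fun _ _ h => h.vertexPerimSqSum_eq.symm) hkk'
      simp only [G] at h
      exact eq_of_vertexPerimSqSum_eq (mem_Icc.1 k.2).2 (mem_Icc.1 k'.2).2 (hdist k) (hdist k') h
    · rintro ⟨v, hv⟩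
      obtain ⟨σ, k, hk, hσ⟩ := hv.1.exists_perm_dist_eq_normalEdges hv.2.1 hv.2.2
      exact ⟨⟨k, hk⟩, (Quot.sound ⟨σ, fun i j => (hdist _ i j).trans (hσ i j).symm⟩).symm⟩
  rw [tetraCount, ← Nat.card_congr (Equiv.ofBijective G hG), Nat.card_eq_fintype_card,
    Fintype.card_coe, Nat.card_Icc]
  omega

theorem tetraCount_perim_3d_add_4 (d : ℕ) (hd : 0 < d) :
    tetraCount (3 * d + 4) d = d - 1 :=
  tetraCount_perim_3d_add_4_general d
end

section
/- The number of integer triangles with perimeter n, up to congruence, is the nearest integer to n²/48 if n is even, and to (n+3)²/48 if n is odd. Equivalently, the number of triples (a, b, c) of positive integers with a ≤ b ≤ c, a + b + c = n, and a + b > c is given by this formula. -/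
/-!
Shrinking every side by one maps the triangles of perimeter `n + 3` with shortest side at least
`2` bijectively onto the possibly degenerate triangles of perimeter `n`. Among the latter, the
degenerate ones `(a, m - a, m)` exist only for `n = 2m` and number `⌊n / 4⌋`, and the only
triangle of perimeter `n + 3` with a side `1` is `(1, m + 1, m + 1)`, again for `n = 2m`. Hence
`T (n + 3) = T n + [n even] (⌊n / 4⌋ + 1)`. The nearest-integer formula satisfies the same
recurrence, because squares are `0` or `1` modulo `3`, and both vanish for `n < 3`.
-/

open Finset

def trianglesWithPerimeter (n : ℕ) : Finset (ℕ × ℕ × ℕ) :=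
  {t ∈ Icc 1 n ×ˢ Icc 1 n ×ˢ Icc 1 n |
    t.1 ≤ t.2.1 ∧ t.2.1 ≤ t.2.2 ∧ t.1 + t.2.1 + t.2.2 = n ∧ t.2.2 < t.1 + t.2.1}

def weakTrianglesWithPerimeter (n : ℕ) : Finset (ℕ × ℕ × ℕ) :=
  {t ∈ Icc 1 n ×ˢ Icc 1 n ×ˢ Icc 1 n |
    t.1 ≤ t.2.1 ∧ t.2.1 ≤ t.2.2 ∧ t.1 + t.2.1 + t.2.2 = n ∧ t.2.2 ≤ t.1 + t.2.1}

theorem mem_trianglesWithPerimeter {n a b c : ℕ} :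
    (a, b, c) ∈ trianglesWithPerimeter n ↔
      1 ≤ a ∧ a ≤ b ∧ b ≤ c ∧ a + b + c = n ∧ c < a + b := by
  simp only [trianglesWithPerimeter, mem_filter, mem_product, mem_Icc]
  omega

theorem mem_weakTrianglesWithPerimeter {n a b c : ℕ} :
    (a, b, c) ∈ weakTrianglesWithPerimeter n ↔
      1 ≤ a ∧ a ≤ b ∧ b ≤ c ∧ a + b + c = n ∧ c ≤ a + b := by
  simp only [weakTrianglesWithPerimeter, mem_filter, mem_product, mem_Icc]
  omega

theorem card_weakTrianglesWithPerimeter (n : ℕ) :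
    #(weakTrianglesWithPerimeter n) =
      #(trianglesWithPerimeter n) + if Even n then n / 4 else 0 := by
  rw [← card_filter_add_card_filter_not (p := fun t : ℕ × ℕ × ℕ => t.2.2 < t.1 + t.2.1)]
  congr 1
  · congr 1
    ext ⟨a, b, c⟩
    simp only [mem_filter, mem_weakTrianglesWithPerimeter, mem_trianglesWithPerimeter]
    omega
  split_ifs with hn
  · obtain ⟨m, rfl⟩ := hn
    have hdeg : {t ∈ weakTrianglesWithPerimeter (m + m) | ¬t.2.2 < t.1 + t.2.1} =
        (Icc 1 (m / 2)).image fun a => (a, m - a, m) := by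
      ext ⟨a, b, c⟩
      simp only [mem_filter, mem_weakTrianglesWithPerimeter, mem_image, mem_Icc, Prod.mk.injEq]
      constructor
      · intro h
        exact ⟨a, by omega⟩
      · rintro ⟨a, h, rfl, rfl, rfl⟩
        omega
    rw [hdeg, card_image_of_injOn fun a _ a' _ h => (Prod.mk.inj h).1, Nat.card_Icc]
    omega
  · rw [card_eq_zero, filter_eq_empty_iff]
    rintro ⟨a, b, c⟩ h
    rw [mem_weakTrianglesWithPerimeter] at h
    obtain ⟨m, rfl⟩ := Nat.not_even_iff_odd.mp hn
    dsimp only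
    omega

theorem card_trianglesWithPerimeter_add_three_eq_card_weak (n : ℕ) :
    #(trianglesWithPerimeter (n + 3)) =
      #(weakTrianglesWithPerimeter n) + if Even n then 1 else 0 := by
  rw [← card_filter_add_card_filter_not (p := fun t : ℕ × ℕ × ℕ => t.1 = 1), add_comm]
  congr 1
  · apply card_nbij' (fun t => (t.1 - 1, t.2.1 - 1, t.2.2 - 1))
      (fun t => (t.1 + 1, t.2.1 + 1, t.2.2 + 1))
    all_goals
      rintro ⟨a, b, c⟩ h
      simp only [coe_filter, Set.mem_ofPred_eq, mem_coe, mem_trianglesWithPerimeter,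
        mem_weakTrianglesWithPerimeter, Prod.mk.injEq] at h ⊢
      omega
  split_ifs with hn
  · obtain ⟨m, rfl⟩ := hn
    rw [card_eq_one]
    refine ⟨(1, m + 1, m + 1), ?_⟩
    ext ⟨a, b, c⟩
    simp only [mem_filter, mem_trianglesWithPerimeter, mem_singleton, Prod.mk.injEq]
    omega
  · rw [card_eq_zero, filter_eq_empty_iff]
    rintro ⟨a, b, c⟩ h
    rw [mem_trianglesWithPerimeter] at h
    obtain ⟨m, rfl⟩ := Nat.not_even_iff_odd.mp hn
    omega

theorem card_trianglesWithPerimeter_add_three (n : ℕ) :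
    #(trianglesWithPerimeter (n + 3)) =
      #(trianglesWithPerimeter n) + if Even n then n / 4 + 1 else 0 := by
  rw [card_trianglesWithPerimeter_add_three_eq_card_weak, card_weakTrianglesWithPerimeter]
  split_ifs <;> omega

theorem Int.sq_emod_three (m : ℤ) : m ^ 2 % 3 = 0 ∨ m ^ 2 % 3 = 1 := by
  obtain h | h | h : m % 3 = 0 ∨ m % 3 = 1 ∨ m % 3 = 2 := by omega
  all_goals rw [sq, Int.mul_emod, h]; decide

theorem two_mul_add_six_sq_add_24_ediv_48 (m : ℤ) :
    ((2 * m + 6) ^ 2 + 24) / 48 = ((2 * m) ^ 2 + 24) / 48 + m / 2 + 1 := by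
  rcases Int.sq_emod_three m with h | h <;> obtain ⟨k, rfl | rfl⟩ := Int.even_or_odd' m <;>
  · ring_nf at h ⊢
    generalize k ^ 2 = B at *
    omega

theorem card_trianglesWithPerimeter (n : ℕ) :
    (#(trianglesWithPerimeter n) : ℤ) =
      if Even n then ((n : ℤ) ^ 2 + 24) / 48 else (((n : ℤ) + 3) ^ 2 + 24) / 48 := by
  induction n using Nat.strong_induction_on with
  | _ n ih =>
  match n with
  | 0 | 1 | 2 => decide
  | n + 3 =>
    rw [card_trianglesWithPerimeter_add_three, Nat.cast_add, ih n (by omega)]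
    obtain ⟨m, rfl | rfl⟩ := Nat.even_or_odd' n
    · have hodd : ¬Even (2 * m + 3) := by simp [parity_simps]
      simp only [even_two_mul, hodd, if_true, if_false]
      push_cast
      rw [show 2 * (m : ℤ) + 3 + 3 = 2 * m + 6 by ring, two_mul_add_six_sq_add_24_ediv_48]
      omega
    · have hodd : ¬Even (2 * m + 1) := by simp [parity_simps]
      have heven : Even (2 * m + 1 + 3) := by simp [parity_simps]
      simp only [hodd, heven, if_true, if_false]
      push_cast
      ring_nf

theorem round_intCast_div_natCast {K : Type*} [Field K] [LinearOrder K] [IsStrictOrderedRing K]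
    [FloorRing K] (k : ℤ) {d : ℕ} (hd : d ≠ 0) :
    round ((k : K) / d) = (2 * k + d) / (2 * d : ℕ) := by
  have : (k : K) / d + 1 / 2 = ((2 * k + d : ℤ) : K) / (2 * d : ℕ) := by
    push_cast
    field_simp
  rw [round_eq, this, Int.floor_div_natCast, Int.floor_intCast]

theorem count_triangles_with_perimeter (n : ℕ) :
    (((Finset.Icc 1 n ×ˢ Finset.Icc 1 n ×ˢ Finset.Icc 1 n).filter
          (fun t : ℕ × ℕ × ℕ =>
            t.1 ≤ t.2.1 ∧ t.2.1 ≤ t.2.2 ∧ t.1 + t.2.1 + t.2.2 = n ∧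
              t.2.2 < t.1 + t.2.1)).card : ℤ) =
      if Even n then round ((n : ℝ) ^ 2 / 48) else round (((n : ℝ) + 3) ^ 2 / 48) := by
  rw [← trianglesWithPerimeter, card_trianglesWithPerimeter]
  have hround (k : ℤ) : round ((k : ℝ) / 48) = (k + 24) / 48 := by
    have := round_intCast_div_natCast (K := ℝ) k (d := 48) (by norm_num)
    push_cast at this
    omega
  split_ifs
  all_goals rw [← hround]; push_cast; rfl
end
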